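/- arXiv:hep-th/9801168 — 3 statements merged into one kernel-verified Lean document; each statement's English description precedes it below -/
import Mathlib

section
/- The sum ∑_{n=1}^∞ H_{n-1} / n^2 equals ζ(3), where H_{n-1} = ∑_{j=1}^{n-1} 1/j (with H_0 = 0). -/
/-!
Double-count `T = ∑_{a,b ≥ 1} 1 / (a b (a + b))`. Summing over `b` first, the inner series
telescopes to `H_a / a²`, and `H_a / a² = H_{a-1} / a² + 1 / a³`, so `T = S + ζ(3)` where `S` is
the series in question. On the other hand `1 / (a b (a + b)) = 1 / (a (a + b)²) + 1 / (b (a + b)²)`;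
summing the first term along the lines `a + b = c` gives `H_{c-1} / c²`, so by symmetry `T = 2 S`.
The terms are nonnegative, so the rearrangements are done in `ℝ≥0∞`, where `S < ∞` since
`H_n ≤ 2 √n`.
-/

open scoped BigOperators

noncomputable def H (n : ℕ) : ℝ := ∑ j ∈ Finset.range n, (1:ℝ)/(j+1)

noncomputable def zeta3 : ℝ := ∑' n : ℕ, (1:ℝ)/((n:ℝ)+1)^3

open Filter Topology Finset
open scoped ENNReal

lemma H_zero : H 0 = 0 :=
  sum_range_zero _

lemma H_succ (n : ℕ) : H (n + 1) = H n + 1 / ((n : ℝ) + 1) :=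
  sum_range_succ _ _

lemma H_nonneg (n : ℕ) : 0 ≤ H n :=
  sum_nonneg fun _ _ => by positivity

lemma one_div_add_one_le_two_mul_sqrt_sub (x : ℝ) (hx : 0 ≤ x) :
    1 / (x + 1) ≤ 2 * (√(x + 1) - √x) := by
  have hb2 : √(x + 1) ^ 2 = x + 1 := Real.sq_sqrt (by linarith)
  have ha2 : √x ^ 2 = x := Real.sq_sqrt hx
  have hab : √x ≤ √(x + 1) := Real.sqrt_le_sqrt (by linarith)
  have hb1 : 1 ≤ √(x + 1) := Real.one_le_sqrt.2 (by linarith)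
  -- `1 = (√(x+1) - √x)(√(x+1) + √x) ≤ 2 (√(x+1) - √x) (x + 1)`
  rw [div_le_iff₀ (by linarith)]
  nlinarith [mul_nonneg (sub_nonneg.2 hab) (sub_nonneg.2 hb1)]

lemma H_le_two_mul_sqrt (n : ℕ) : H n ≤ 2 * √n := by
  induction n with
  | zero => simp [H_zero]
  | succ n ih =>
    rw [H_succ, Nat.cast_succ]
    linarith [one_div_add_one_le_two_mul_sqrt_sub n n.cast_nonneg]

lemma summable_H_div_sq : Summable fun n : ℕ => H n / ((n : ℝ) + 1) ^ 2 := by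
  have hp : Summable fun n : ℕ => 2 * (1 / |(n : ℝ) + 1| ^ (3 / 2 : ℝ)) :=
    ((Real.summable_one_div_nat_add_rpow 1 _).2 (by norm_num)).mul_left 2
  refine hp.of_nonneg_of_le (fun n => by have := H_nonneg n; positivity) fun n => ?_
  have hx : (0 : ℝ) < n + 1 := by positivity
  have hsqrt : √((n : ℝ) + 1) * √((n : ℝ) + 1) = n + 1 := Real.mul_self_sqrt hx.le
  have hpow : ((n : ℝ) + 1) ^ (3 / 2 : ℝ) = (n + 1) * √((n : ℝ) + 1) := by
    rw [Real.sqrt_eq_rpow, ← Real.rpow_one_add' hx.le (by norm_num)]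
    norm_num
  calc H n / ((n : ℝ) + 1) ^ 2 ≤ 2 * √((n : ℝ) + 1) / ((n : ℝ) + 1) ^ 2 := by
        gcongr
        exact (H_le_two_mul_sqrt n).trans (by gcongr; linarith)
    _ = 2 * (1 / |(n : ℝ) + 1| ^ (3 / 2 : ℝ)) := by
        rw [abs_of_pos hx, hpow, mul_one_div, div_eq_div_iff (by positivity) (by positivity)]
        linear_combination (2 * ((n : ℝ) + 1)) * hsqrt

lemma summable_one_div_add_one_pow {p : ℕ} (hp : 1 < p) :
    Summable fun n : ℕ => 1 / ((n : ℝ) + 1) ^ p := by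
  simpa using (summable_nat_add_iff 1).2 (Real.summable_one_div_nat_pow.2 hp)

lemma hasSum_sub_nat_add_of_antitone {f : ℕ → ℝ} (hf : Antitone f)
    (hf0 : Tendsto f atTop (𝓝 0)) (k : ℕ) :
    HasSum (fun n => f n - f (n + k)) (∑ i ∈ range k, f i) := by
  have hpartial (N : ℕ) : ∑ n ∈ range N, (f n - f (n + k)) =
      ∑ i ∈ range k, f i - ∑ i ∈ range k, f (N + i) := by
    have h1 := sum_range_add f N k
    have h2 := sum_range_add f k N
    simp only [sum_sub_distrib, add_comm _ k] at h2 ⊢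
    rw [add_comm k N] at h2
    linarith
  have htail : Tendsto (fun N => ∑ i ∈ range k, f (N + i)) atTop (𝓝 0) := by
    simpa using tendsto_finsetSum (range k) fun i _ => hf0.comp (tendsto_add_atTop_nat i)
  rw [hasSum_iff_tendsto_nat_of_nonneg fun n => sub_nonneg.2 (hf (n.le_add_right k))]
  simpa [hpartial] using tendsto_const_nhds.sub htail

lemma hasSum_one_div_mul_mul_add (m : ℕ) :
    HasSum (fun n : ℕ => 1 / (((m : ℝ) + 1) * ((n : ℝ) + 1) * ((m : ℝ) + n + 2)))
      (H (m + 1) / ((m : ℝ) + 1) ^ 2) := by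
  have hanti : Antitone fun n : ℕ => 1 / ((n : ℝ) + 1) := fun a b hab => by
    dsimp only
    gcongr
  have htele := (hasSum_sub_nat_add_of_antitone hanti tendsto_one_div_add_atTop_nhds_zero_nat
    (m + 1)).mul_left (1 / ((m : ℝ) + 1) ^ 2)
  have hterm (n : ℕ) : 1 / (((m : ℝ) + 1) * ((n : ℝ) + 1) * ((m : ℝ) + n + 2)) =
      1 / ((m : ℝ) + 1) ^ 2 * (1 / ((n : ℝ) + 1) - 1 / (((n + (m + 1) : ℕ) : ℝ) + 1)) := by
    push_cast
    field_simp
    ring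
  have hvalue : H (m + 1) / ((m : ℝ) + 1) ^ 2 =
      1 / ((m : ℝ) + 1) ^ 2 * ∑ i ∈ range (m + 1), 1 / ((i : ℝ) + 1) := by
    rw [H]
    ring
  rw [funext hterm, hvalue]
  exact htele

lemma one_div_mul_mul_add {a b : ℝ} (ha : a ≠ 0) (hb : b ≠ 0) (hab : a + b ≠ 0) :
    1 / (a * b * (a + b)) = 1 / (a * (a + b) ^ 2) + 1 / (b * (a + b) ^ 2) := by
  field_simp
  ring

lemma ENNReal.tsum_add_comp_swap {α : Type*} (f : α × α → ℝ≥0∞) :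
    ∑' p, (f p + f p.swap) = 2 * ∑' p, f p := by
  rw [ENNReal.tsum_add, two_mul]
  congr 1
  exact (Equiv.prodComm α α).tsum_eq f

lemma ENNReal.tsum_prod_eq_tsum_sum_antidiagonal {A : Type*} [AddMonoid A] [HasAntidiagonal A]
    (f : A × A → ℝ≥0∞) : ∑' p, f p = ∑' n, ∑ p ∈ antidiagonal n, f p := by
  rw [← HasAntidiagonal.sigmaAntidiagonalEquivProd.tsum_eq, ENNReal.tsum_sigma']
  exact tsum_congr fun n => tsum_subtype (antidiagonal n) f

lemma sum_antidiagonal_one_div_mul_add_sq (N : ℕ) :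
    ∑ p ∈ antidiagonal N, 1 / (((p.1 : ℝ) + 1) * ((p.1 : ℝ) + p.2 + 2) ^ 2) =
      H (N + 1) / ((N : ℝ) + 2) ^ 2 := by
  have hterm : ∀ p ∈ antidiagonal N, 1 / (((p.1 : ℝ) + 1) * ((p.1 : ℝ) + p.2 + 2) ^ 2) =
      1 / ((p.1 : ℝ) + 1) * (1 / ((N : ℝ) + 2) ^ 2) := by
    intro p hp
    have hN : (p.1 : ℝ) + p.2 = N := by exact_mod_cast mem_antidiagonal.1 hp
    rw [hN]
    field_simp
  rw [sum_congr rfl hterm, ← sum_mul, Nat.sum_antidiagonal_eq_sum_range_succ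
    (fun i _ => 1 / ((i : ℝ) + 1)), H, mul_one_div]

lemma tsum_ofReal_H_div_sq_eq_shift :
    ∑' n : ℕ, ENNReal.ofReal (H n / ((n : ℝ) + 1) ^ 2) =
      ∑' N : ℕ, ENNReal.ofReal (H (N + 1) / ((N : ℝ) + 2) ^ 2) := by
  rw [tsum_eq_zero_add' ENNReal.summable]
  simp only [H_zero, zero_div, ENNReal.ofReal_zero, zero_add, Nat.cast_succ, add_assoc,
    one_add_one_eq_two]

lemma tsum_ofReal_one_div_mul_add_sq :
    ∑' p : ℕ × ℕ, ENNReal.ofReal (1 / (((p.1 : ℝ) + 1) * ((p.1 : ℝ) + p.2 + 2) ^ 2)) =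
      ∑' n : ℕ, ENNReal.ofReal (H n / ((n : ℝ) + 1) ^ 2) := by
  rw [ENNReal.tsum_prod_eq_tsum_sum_antidiagonal, tsum_ofReal_H_div_sq_eq_shift]
  refine tsum_congr fun N => ?_
  rw [← ENNReal.ofReal_sum_of_nonneg fun _ _ => by positivity,
    sum_antidiagonal_one_div_mul_add_sq]

lemma tsum_ofReal_one_div_mul_mul_add_eq_two_mul :
    ∑' p : ℕ × ℕ, ENNReal.ofReal (1 / (((p.1 : ℝ) + 1) * ((p.2 : ℝ) + 1) * ((p.1 : ℝ) + p.2 + 2))) =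
      2 * ∑' n : ℕ, ENNReal.ofReal (H n / ((n : ℝ) + 1) ^ 2) := by
  rw [← tsum_ofReal_one_div_mul_add_sq, ← ENNReal.tsum_add_comp_swap]
  refine tsum_congr fun p => ?_
  rw [← ENNReal.ofReal_add (by positivity) (by positivity), Prod.fst_swap, Prod.snd_swap]
  congr 1
  linear_combination one_div_mul_mul_add (a := (p.1 : ℝ) + 1) (b := (p.2 : ℝ) + 1)
    (by positivity) (by positivity) (by positivity)

lemma tsum_ofReal_one_div_mul_mul_add_eq_add :
    ∑' p : ℕ × ℕ, ENNReal.ofReal (1 / (((p.1 : ℝ) + 1) * ((p.2 : ℝ) + 1) * ((p.1 : ℝ) + p.2 + 2))) =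
      ∑' n : ℕ, ENNReal.ofReal (H n / ((n : ℝ) + 1) ^ 2) +
        ∑' n : ℕ, ENNReal.ofReal (1 / ((n : ℝ) + 1) ^ 3) := by
  rw [ENNReal.tsum_prod', ← ENNReal.tsum_add]
  refine tsum_congr fun m => ?_
  have hm := hasSum_one_div_mul_mul_add m
  rw [← ENNReal.ofReal_tsum_of_nonneg (fun n => by positivity) hm.summable, hm.tsum_eq,
    ← ENNReal.ofReal_add (by have := H_nonneg m; positivity) (by positivity), H_succ]
  congr 1
  field_simp

theorem stmt1 : ∑' n : ℕ, H n / ((n:ℝ)+1)^2 = zeta3 := by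
  have hS0 (n : ℕ) : 0 ≤ H n / ((n : ℝ) + 1) ^ 2 := by have := H_nonneg n; positivity
  have hZ0 (n : ℕ) : (0 : ℝ) ≤ 1 / ((n : ℝ) + 1) ^ 3 := by positivity
  have key := tsum_ofReal_one_div_mul_mul_add_eq_add.symm.trans
    tsum_ofReal_one_div_mul_mul_add_eq_two_mul
  rw [← ENNReal.ofReal_tsum_of_nonneg hS0 summable_H_div_sq,
    ← ENNReal.ofReal_tsum_of_nonneg hZ0 (summable_one_div_add_one_pow (by norm_num)), two_mul,
    ENNReal.add_right_inj ENNReal.ofReal_ne_top] at key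
  exact ((ENNReal.ofReal_eq_ofReal_iff (tsum_nonneg hZ0) (tsum_nonneg hS0)).1 key).symm
end

section
/- The double series ∑_{n=0}^∞ ∑_{k=1}^∞ 1 / (k (n+k)(n+2k)) equals (5/4)ζ(3). -/
open scoped BigOperators

/-!
With `f a b = 1 / (a b (a + b))`, the series is the sum of `f` over `1 ≤ a ≤ b` (put `a = k`,
`b = n + k`). As `f` is symmetric, this is `(T + D) / 2`, where `T` is the sum of `f` over all
`a, b ≥ 1` and `D = ∑ f a a = ζ(3) / 2`.

Euler's evaluation `T = 2 ζ(3)`: summing by rows, `1 / (b (a + b)) = (1 / b - 1 / (a + b)) / a`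
telescopes and `T = ∑ H_a / a²`; summing along the antidiagonals `a + b = s`,
`1 / (a b) = (1 / a + 1 / b) / s` gives `T = 2 ∑ H_{s-1} / s² = 2 (∑ H_s / s² - ζ(3))`.
-/

open Finset Filter Topology

theorem hasSum_sub_add_of_antitone {g : ℕ → ℝ} (hg : Antitone g)
    (hg_lim : Tendsto g atTop (𝓝 0)) (m : ℕ) :
    HasSum (fun n => g n - g (n + m)) (∑ i ∈ range m, g i) := by
  have hstep : ∀ n, ∑ j ∈ range m, g (n + j) - ∑ j ∈ range m, g (n + 1 + j) = g n - g (n + m) := by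
    intro n
    have h₁ := sum_range_succ' (fun j => g (n + j)) m
    have h₂ := sum_range_succ (fun j => g (n + j)) m
    simp only [add_zero, ← add_assoc, add_right_comm n _ 1] at h₁ h₂
    linarith
  rw [hasSum_iff_tendsto_nat_of_nonneg fun n => sub_nonneg.2 (hg (Nat.le_add_right n m))]
  simp_rw [← hstep, sum_range_sub', zero_add]
  have htail : Tendsto (fun N => ∑ j ∈ range m, g (N + j)) atTop (𝓝 0) := by
    simpa using tendsto_finsetSum (range m) fun j _ => hg_lim.comp (tendsto_add_atTop_nat j)
  simpa using htail.const_sub (∑ j ∈ range m, g j)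

def upperTriangle (p : ℕ × ℕ) : ℕ × ℕ := (p.2, p.2 + p.1)

def strictLowerTriangle (p : ℕ × ℕ) : ℕ × ℕ := (p.2 + p.1 + 1, p.2)

theorem upperTriangle_injective : Function.Injective upperTriangle := by
  rintro ⟨n, k⟩ ⟨n', k'⟩ h
  simp only [upperTriangle, Prod.mk.injEq] at h
  ext <;> omega

theorem strictLowerTriangle_injective : Function.Injective strictLowerTriangle := by
  rintro ⟨n, k⟩ ⟨n', k'⟩ h
  simp only [strictLowerTriangle, Prod.mk.injEq] at h
  ext <;> omega

theorem range_upperTriangle : Set.range upperTriangle = {p | p.1 ≤ p.2} := by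
  ext ⟨a, b⟩
  simp only [upperTriangle, Set.mem_range, Prod.mk.injEq, Set.mem_ofPred_eq, Prod.exists]
  exact ⟨by omega, fun h => ⟨b - a, a, rfl, by omega⟩⟩

theorem range_strictLowerTriangle : Set.range strictLowerTriangle = {p | p.1 ≤ p.2}ᶜ := by
  ext ⟨a, b⟩
  simp only [strictLowerTriangle, Set.mem_range, Prod.mk.injEq, Set.mem_compl_iff,
    Set.mem_ofPred_eq, Prod.exists]
  exact ⟨by omega, fun h => ⟨a - b - 1, b, by omega, rfl⟩⟩

section Reindexing

variable {E : Type*} [AddCommGroup E] [UniformSpace E] [IsUniformAddGroup E] [CompleteSpace E]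
  [T0Space E]

theorem Summable.tsum_eq_tsum_upper_add_tsum_lower {f : ℕ × ℕ → E} (hf : Summable f) :
    ∑' p, f p = ∑' n, ∑' k, f (k, k + n) + ∑' n, ∑' k, f (k + n + 1, k) := by
  have hupper := hf.comp_injective upperTriangle_injective
  have hlower := hf.comp_injective strictLowerTriangle_injective
  have hcompl : IsCompl (Set.range upperTriangle) (Set.range strictLowerTriangle) := by
    rw [range_upperTriangle, range_strictLowerTriangle]
    exact isCompl_compl
  rw [show ∑' n, ∑' k, f (k, k + n) = ∑' p, f (upperTriangle p) from hupper.tsum_prod.symm,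
    show ∑' n, ∑' k, f (k + n + 1, k) = ∑' p, f (strictLowerTriangle p) from
      hlower.tsum_prod.symm]
  exact ((upperTriangle_injective.hasSum_range_iff.2 hupper.hasSum).add_isCompl hcompl
    (strictLowerTriangle_injective.hasSum_range_iff.2 hlower.hasSum)).tsum_eq

theorem Summable.tsum_add_tsum_diag_eq_two_nsmul {f : ℕ × ℕ → E} (hf : Summable f)
    (hf_swap : ∀ p, f p.swap = f p) :
    ∑' p, f p + ∑' k, f (k, k) = 2 • ∑' n, ∑' k, f (k, k + n) := by
  have hlower : ∀ n k, f (k + n + 1, k) = f (k, k + (n + 1)) := fun n k => by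
    rw [← hf_swap, Prod.swap_prod_mk, add_assoc]
  have hupper : Summable fun n => ∑' k, f (k, k + n) :=
    (hf.comp_injective upperTriangle_injective).prod
  rw [hf.tsum_eq_tsum_upper_add_tsum_lower, hupper.tsum_eq_zero_add]
  simp only [hlower, add_zero, two_nsmul]
  abel

theorem Summable.tsum_eq_tsum_sum_antidiagonal {A : Type*} [AddCommMonoid A] [HasAntidiagonal A]
    {f : A × A → E} (hf : Summable f) :
    ∑' p, f p = ∑' n, ∑ p ∈ antidiagonal n, f p := by
  rw [← HasAntidiagonal.sigmaAntidiagonalEquivProd.tsum_eq f]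
  exact (HasAntidiagonal.sigmaAntidiagonalEquivProd.summable_iff.2 hf).tsum_sigma.trans
    (tsum_congr fun n => (tsum_fintype _).trans (sum_coe_sort _ _))

end Reindexing

-- `tornheimTerm (a, b)` is `f (a + 1) (b + 1)`, with `f a b = 1 / (a b (a + b))`.
noncomputable def tornheimTerm (p : ℕ × ℕ) : ℝ :=
  1 / (((p.1 : ℝ) + 1) * ((p.2 : ℝ) + 1) * ((p.1 : ℝ) + p.2 + 2))

theorem tornheimTerm_swap (p : ℕ × ℕ) : tornheimTerm p.swap = tornheimTerm p := by
  simp only [tornheimTerm, Prod.fst_swap, Prod.snd_swap]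
  ring_nf

theorem tornheimTerm_nonneg (p : ℕ × ℕ) : 0 ≤ tornheimTerm p := by
  unfold tornheimTerm
  positivity

theorem tornheimTerm_le (a b : ℕ) :
    tornheimTerm (a, b) ≤ 1 / ((a : ℝ) + 1) ^ (3 / 2 : ℝ) * (1 / ((b : ℝ) + 1) ^ (3 / 2 : ℝ)) := by
  have hsq : ∀ x : ℝ, 0 ≤ x → (x ^ (3 / 2 : ℝ)) ^ 2 = x ^ 3 := fun x hx => by
    rw [← Real.rpow_natCast, ← Real.rpow_mul hx]
    norm_num
  have ha : (0 : ℝ) ≤ a := a.cast_nonneg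
  have hb : (0 : ℝ) ≤ b := b.cast_nonneg
  refine le_of_pow_le_pow_left₀ two_ne_zero (by positivity) ?_
  rw [mul_pow, div_pow, div_pow, hsq _ (by positivity), hsq _ (by positivity), tornheimTerm,
    div_pow, div_mul_div_comm, one_pow, one_mul]
  apply one_div_le_one_div_of_le (by positivity)
  have hamgm : ((a : ℝ) + 1) * (b + 1) ≤ (a + b + 2) ^ 2 := by nlinarith
  calc ((a : ℝ) + 1) ^ 3 * ((b : ℝ) + 1) ^ 3
      = (((a : ℝ) + 1) * ((b : ℝ) + 1)) ^ 2 * (((a : ℝ) + 1) * ((b : ℝ) + 1)) := by ring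
    _ ≤ (((a : ℝ) + 1) * ((b : ℝ) + 1)) ^ 2 * ((a : ℝ) + b + 2) ^ 2 := by gcongr
    _ = _ := by ring

theorem summable_tornheimTerm : Summable tornheimTerm := by
  have hg : Summable fun n : ℕ => 1 / ((n : ℝ) + 1) ^ (3 / 2 : ℝ) :=
    ((Real.summable_one_div_nat_add_rpow 1 (3 / 2)).2 (by norm_num)).congr fun n => by
      rw [abs_of_pos (by positivity)]
  refine (hg.mul_of_nonneg hg (fun n => by positivity) fun n => by positivity).of_nonneg_of_le
    tornheimTerm_nonneg ?_
  rintro ⟨a, b⟩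
  exact tornheimTerm_le a b

theorem hasSum_tornheimTerm_row (a : ℕ) :
    HasSum (fun b => tornheimTerm (a, b)) (H (a + 1) / ((a : ℝ) + 1) ^ 2) := by
  have htel := hasSum_sub_add_of_antitone (g := fun n : ℕ => 1 / ((n : ℝ) + 1))
    (fun m n h => by dsimp only; gcongr) tendsto_one_div_add_atTop_nhds_zero_nat (a + 1)
  rw [div_eq_inv_mul, ← one_div]
  refine (htel.mul_left _).congr_fun fun b => ?_
  simp only [tornheimTerm]
  push_cast
  field_simp
  ring

theorem sum_antidiagonal_tornheimTerm (s : ℕ) :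
    ∑ p ∈ antidiagonal s, tornheimTerm p = 2 * H (s + 1) / ((s : ℝ) + 2) ^ 2 := by
  have hsplit : ∀ p ∈ antidiagonal s, tornheimTerm p
      = (1 / ((p.1 : ℝ) + 1) + 1 / ((p.swap.1 : ℝ) + 1)) / ((s : ℝ) + 2) ^ 2 := by
    intro p hp
    rw [HasAntidiagonal.mem_antidiagonal] at hp
    have hs : (s : ℝ) = p.1 + p.2 := by exact_mod_cast hp.symm
    rw [tornheimTerm, hs, Prod.fst_swap]
    field_simp
    ring
  rw [sum_congr rfl hsplit, ← sum_div, sum_add_distrib,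
    Nat.sum_antidiagonal_swap (f := fun p => 1 / ((p.1 : ℝ) + 1)),
    Nat.sum_antidiagonal_eq_sum_range_succ_mk, H]
  ring

theorem summable_one_div_succ_pow_three : Summable fun n : ℕ => 1 / ((n : ℝ) + 1) ^ 3 := by
  simpa using (summable_nat_add_iff 1).2 (Real.summable_one_div_nat_pow.2 (by norm_num : 1 < 3))

theorem H_succ_div_sq_sub_H_div_sq (n : ℕ) :
    H (n + 1) / ((n : ℝ) + 1) ^ 2 - H n / ((n : ℝ) + 1) ^ 2 = 1 / ((n : ℝ) + 1) ^ 3 := by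
  rw [H, H, sum_range_succ]
  field_simp
  ring

theorem summable_H_succ_div_sq : Summable fun n : ℕ => H (n + 1) / ((n : ℝ) + 1) ^ 2 :=
  summable_tornheimTerm.prod.congr fun a => (hasSum_tornheimTerm_row a).tsum_eq

theorem tsum_tornheimTerm_eq_tsum_rows :
    ∑' p, tornheimTerm p = ∑' n : ℕ, H (n + 1) / ((n : ℝ) + 1) ^ 2 := by
  rw [summable_tornheimTerm.tsum_prod]
  exact tsum_congr fun a => (hasSum_tornheimTerm_row a).tsum_eq

theorem tsum_tornheimTerm_eq_tsum_antidiagonals :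
    ∑' p, tornheimTerm p = 2 * ∑' n : ℕ, H n / ((n : ℝ) + 1) ^ 2 := by
  have hsum : Summable fun n : ℕ => H n / ((n : ℝ) + 1) ^ 2 :=
    (summable_H_succ_div_sq.sub summable_one_div_succ_pow_three).congr fun n => by
      rw [← H_succ_div_sq_sub_H_div_sq]
      ring
  rw [summable_tornheimTerm.tsum_eq_tsum_sum_antidiagonal, hsum.tsum_eq_zero_add,
    show H 0 = 0 from sum_range_zero _, zero_div, zero_add, ← tsum_mul_left]
  refine tsum_congr fun s => ?_
  rw [sum_antidiagonal_tornheimTerm]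
  push_cast
  ring

theorem tsum_tornheimTerm : ∑' p, tornheimTerm p = 2 * zeta3 := by
  have hdiff : ∑' n : ℕ, H n / ((n : ℝ) + 1) ^ 2
      = ∑' n : ℕ, H (n + 1) / ((n : ℝ) + 1) ^ 2 - zeta3 := by
    rw [zeta3, ← summable_H_succ_div_sq.tsum_sub summable_one_div_succ_pow_three]
    exact tsum_congr fun n => by
      rw [← H_succ_div_sq_sub_H_div_sq]
      ring
  have hrows := tsum_tornheimTerm_eq_tsum_rows
  have hantidiagonals := tsum_tornheimTerm_eq_tsum_antidiagonals
  rw [hdiff] at hantidiagonals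
  linarith

theorem tsum_tornheimTerm_diag : ∑' k : ℕ, tornheimTerm (k, k) = zeta3 / 2 := by
  rw [zeta3, ← tsum_div_const]
  refine tsum_congr fun k => ?_
  simp only [tornheimTerm]
  field_simp
  ring

theorem stmt13 : ∑' n : ℕ, ∑' k : ℕ,
    (1:ℝ) / (((k:ℝ)+1) * ((n:ℝ)+(k:ℝ)+1) * ((n:ℝ)+2*(k:ℝ)+2)) = (5/4) * zeta3 := by
  have hterm : ∀ n k : ℕ, (1:ℝ) / (((k:ℝ)+1) * ((n:ℝ)+(k:ℝ)+1) * ((n:ℝ)+2*(k:ℝ)+2))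
      = tornheimTerm (k, k + n) := fun n k => by
    simp only [tornheimTerm]
    push_cast
    ring_nf
  have hsplit := summable_tornheimTerm.tsum_add_tsum_diag_eq_two_nsmul tornheimTerm_swap
  rw [tsum_tornheimTerm, tsum_tornheimTerm_diag, two_nsmul] at hsplit
  simp_rw [hterm]
  linarith
end

section
/- The double series ∑_{n=1}^∞ ∑_{k=1}^∞ (1/(k!·k)) · Γ(2k)Γ(n+k)/Γ(1+n+2k) equals (1/2)ζ(3). -/
/-! For fixed `k` the series in `n` telescopes: `(n+a)!/(n+a+d+2)! = g n - g (n+1)` with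
`g n = (n+a)!/((d+1) (n+a+d+1)!)`, so it sums to `a!/((d+1) (a+d+1)!)`. With `a = k+1`, `d = k`
and the prefactor `(2k+1)!/((k+1)! (k+1))` this is `1/(2 (k+1)^3)`. All terms are nonnegative,
so the order of summation may be exchanged, and summing over `k` gives `ζ(3)/2`. -/

open scoped BigOperators

open Filter Topology Nat

theorem hasSum_sub_succ_of_antitone {g : ℕ → ℝ} (hg : Antitone g) (hlim : Tendsto g atTop (𝓝 0)) :
    HasSum (fun n => g n - g (n + 1)) (g 0) := by
  rw [hasSum_iff_tendsto_nat_of_nonneg fun n => sub_nonneg.2 (hg n.le_succ)]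
  simp_rw [Finset.sum_range_sub']
  simpa using hlim.const_sub (g 0)

theorem tsum_comm_of_nonneg {α β : Type*} {f : α → β → ℝ} (hf : ∀ a b, 0 ≤ f a b)
    (hrow : ∀ a, Summable (f a)) (hsum : Summable fun a => ∑' b, f a b) :
    ∑' b, ∑' a, f a b = ∑' a, ∑' b, f a b :=
  ((summable_prod_of_nonneg fun p => hf p.1 p.2).2 ⟨hrow, hsum⟩).tsum_comm

theorem factorial_div_factorial_le (m d : ℕ) : ((m ! : ℝ) / (m + d + 1)!) ≤ 1 / (m + 1) := by
  rw [div_le_div_iff₀ (by positivity) (by positivity), one_mul]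
  have : m ! * (m + 1) ≤ (m + d + 1)! := by
    rw [mul_comm, ← Nat.factorial_succ]; exact Nat.factorial_le (by omega)
  exact_mod_cast this

theorem hasSum_factorial_div_factorial (a d : ℕ) :
    HasSum (fun n => ((n + a)! : ℝ) / (n + a + d + 2)!) (a ! / ((d + 1) * (a + d + 1)!)) := by
  set g : ℕ → ℝ := fun n => (n + a)! / ((d + 1) * (n + a + d + 1)!) with hg
  have hstep : ∀ n, g n - g (n + 1) = ((n + a)! : ℝ) / (n + a + d + 2)! := by
    intro n
    have h1 : (n + 1 + a)! = (n + a + 1) * (n + a)! := by rw [← Nat.factorial_succ]; ring_nf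
    have h2 : (n + 1 + a + d + 1)! = (n + a + d + 2) * (n + a + d + 1)! := by
      rw [← Nat.factorial_succ]; ring_nf
    have h3 : (n + a + d + 2)! = (n + a + d + 2) * (n + a + d + 1)! := Nat.factorial_succ _
    simp only [hg, h1, h2, h3]
    push_cast
    field_simp
    ring
  have hanti : Antitone g := antitone_nat_of_succ_le fun n => sub_nonneg.1 (hstep n ▸ by positivity)
  have hlim : Tendsto g atTop (𝓝 0) := by
    refine squeeze_zero (fun n => by positivity) (fun n => ?_)
      tendsto_one_div_add_atTop_nhds_zero_nat
    calc g n ≤ (n + a)! / (n + a + d + 1)! :=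
          div_le_div_of_nonneg_left (by positivity) (by positivity)
            (le_mul_of_one_le_left (by positivity) (by simp))
      _ ≤ 1 / (n + a + 1) := by exact_mod_cast factorial_div_factorial_le (n + a) d
      _ ≤ 1 / (n + 1) := by gcongr; simp
  convert hasSum_sub_succ_of_antitone hanti hlim using 1
  · exact funext fun n => (hstep n).symm
  · simp [hg]

theorem hasSum_inner_sum (k : ℕ) :
    HasSum (fun n : ℕ => (1 / ((Nat.factorial (k+1) : ℝ) * ((k:ℝ)+1))) *
      ((Nat.factorial (2*k+1) : ℝ) * (Nat.factorial (n+k+1) : ℝ) / (Nat.factorial (n+2*k+3) : ℝ)))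
      (1 / 2 * (1 / ((k : ℝ) + 1) ^ 3)) := by
  have h := (hasSum_factorial_div_factorial (k + 1) k).mul_left
    (((2 * k + 1)! : ℝ) / ((k + 1)! * (k + 1)))
  have hval : ((2 * k + 1)! : ℝ) / ((k + 1)! * (k + 1)) * ((k + 1)! / ((k + 1) * (k + 1 + k + 1)!))
      = 1 / 2 * (1 / ((k : ℝ) + 1) ^ 3) := by
    rw [show k + 1 + k + 1 = 2 * k + 1 + 1 by ring, Nat.factorial_succ (2 * k + 1)]
    push_cast
    field_simp
    ring
  refine hval ▸ h.congr_fun fun n => ?_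
  rw [show n + 2 * k + 3 = n + (k + 1) + k + 2 by ring, show n + k + 1 = n + (k + 1) by ring]
  ring

theorem summable_one_div_nat_add_one_pow {p : ℕ} (hp : 1 < p) :
    Summable fun k : ℕ => 1 / ((k : ℝ) + 1) ^ p := by
  simpa using (summable_nat_add_iff 1).2 (Real.summable_one_div_nat_pow.2 hp)

theorem stmt15 : ∑' n : ℕ, ∑' k : ℕ,
    (1 / ((Nat.factorial (k+1) : ℝ) * ((k:ℝ)+1))) *
    ((Nat.factorial (2*k+1) : ℝ) * (Nat.factorial (n+k+1) : ℝ) / (Nat.factorial (n+2*k+3) : ℝ))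
    = (1/2) * zeta3 := by
  have hrow := fun k => (hasSum_inner_sum k).tsum_eq
  have hsum := (summable_one_div_nat_add_one_pow (by norm_num : 1 < 3)).mul_left (1 / 2)
  rw [tsum_comm_of_nonneg (fun k n => by positivity) (fun k => (hasSum_inner_sum k).summable)
    (by simpa only [hrow] using hsum), tsum_congr hrow, tsum_mul_left, zeta3]
end
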